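/- If there is a node t ∈ L^{[1]}_φ whose height is a limit point of the club C, then there is an uncountable antichain X in T with ∧(X) ∩ K = ∅. -/

import Mathlib

noncomputable section

namespace Basis5

/-- The first uncountable ordinal. -/
def omega1 : Ordinal.{0} := (Cardinal.aleph 1).ord

/-- A node of the binary tree `2^{<ω₁}`: a function defined (i.e. `some`-valued)
exactly on a countable ordinal. -/
def IsNodeFun (f : Ordinal.{0} → Option Bool) : Prop :=
  ∃ a, a < omega1 ∧ ∀ ξ, (f ξ).isSome ↔ ξ < a

def BNode := {f : Ordinal → Option Bool // IsNodeFun f}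

/-- The height (domain) of a node. -/
def ht (t : BNode) : Ordinal := sInf {a | ∀ ξ, (t.1 ξ).isSome ↔ ξ < a}

/-- Restriction of a node to (at most) height `α`. -/
def restrict (t : BNode) (α : Ordinal) : BNode :=
  ⟨fun ξ => if ξ < α then t.1 ξ else none, by
    obtain ⟨a, ha, hfa⟩ := t.2
    refine ⟨min α a, lt_of_le_of_lt (min_le_right _ _) ha, fun ξ => ?_⟩
    by_cases h : ξ < α
    · simp [h, hfa ξ, lt_min_iff]
    · simp [h, lt_min_iff]⟩

/-- `s` is an initial segment of `t` (the tree order of `2^{<ω₁}`). -/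
def extends' (s t : BNode) : Prop := restrict t (ht s) = s

/-- `s` and `t` are incomparable in the tree order. -/
def Incomp (s t : BNode) : Prop := ¬ extends' s t ∧ ¬ extends' t s

/-- `D(s,t)`, the set of coordinates where `s` and `t` differ. -/
def diffSet (s t : BNode) : Set Ordinal := {ξ | s.1 ξ ≠ t.1 ξ}

/-- `Δ(s,t) = min D(s,t)`. -/
def delta (s t : BNode) : Ordinal := sInf (diffSet s t)

/-- The meet `s ∧ t = s ↾ Δ(s,t)`. -/
def meet (s t : BNode) : BNode := restrict s (delta s t)

/-- Lexicographic (non-strict) order on nodes of the same height. -/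
def lexLE (s t : BNode) : Prop := s = t ∨ t.1 (delta s t) = some true

/-- `∧(X)`: the set of pairwise meets of incomparable elements of `X`. -/
def wedgeSet (X : Set BNode) : Set BNode :=
  {w | ∃ s ∈ X, ∃ t ∈ X, Incomp s t ∧ w = meet s t}

def DownClosed (A : Set BNode) : Prop := ∀ t ∈ A, ∀ α, restrict t α ∈ A

def IsAntichainN (X : Set BNode) : Prop := ∀ s ∈ X, ∀ t ∈ X, s ≠ t → Incomp s t

/-- An Aronszajn tree: uncountable, downward closed, countable levels and chains. -/
def IsAronszajn (T : Set BNode) : Prop :=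
  DownClosed T ∧ ¬ T.Countable ∧ (∀ α, {t : BNode | t ∈ T ∧ ht t = α}.Countable) ∧
    ∀ c : Set BNode, c ⊆ T → (∀ s ∈ c, ∀ t ∈ c, extends' s t ∨ extends' t s) → c.Countable

/-- A subtree: an uncountable downward closed subset. -/
def IsSubtree (T A : Set BNode) : Prop := A ⊆ T ∧ DownClosed A ∧ ¬ A.Countable

def Coherent (T : Set BNode) : Prop :=
  ∀ s ∈ T, ∀ t ∈ T, ht s = ht t → (diffSet s t).Finite

def IsSpecial (T : Set BNode) : Prop :=
  ∃ f : BNode → ℕ, ∀ s ∈ T, ∀ t ∈ T, extends' s t → s ≠ t → f s ≠ f t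

def FinModClosed (T : Set BNode) : Prop :=
  ∀ t ∈ T, ∀ s : BNode, ht s = ht t → (diffSet s t).Finite → s ∈ T

/-- Club subsets of `ω₁`. -/
def IsClubBelow (C : Set Ordinal) : Prop :=
  C ⊆ Set.Iio omega1 ∧ (∀ a < omega1, ∃ b ∈ C, a < b) ∧
    ∀ a < omega1, (C ∩ Set.Iio a).Nonempty → sSup (C ∩ Set.Iio a) = a → a ∈ C

/-- Stationary subsets of `ω₁`. -/
def IsStationary (S : Set Ordinal) : Prop :=
  S ⊆ Set.Iio omega1 ∧ ∀ C, IsClubBelow C → (S ∩ C).Nonempty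

/-- `a` is a limit point of `C`. -/
def IsLimitOf (C : Set Ordinal) (a : Ordinal) : Prop :=
  (C ∩ Set.Iio a).Nonempty ∧ sSup (C ∩ Set.Iio a) = a

/-- Membership in `T^{[n]}`: an `≤_lex`-nondecreasing `n`-tuple from a single level of `T`. -/
def IsTup (T : Set BNode) (n : ℕ) (σ : Fin n → BNode) : Prop :=
  (∀ i, σ i ∈ T) ∧ (∀ i j, ht (σ i) = ht (σ j)) ∧
    ∀ i j : Fin n, i ≤ j → lexLE (σ i) (σ j)

/-- Coordinatewise restriction of a tuple. -/
def tres {n : ℕ} (σ : Fin n → BNode) (α : Ordinal) : Fin n → BNode :=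
  fun i => restrict (σ i) α

def tExt {n : ℕ} (σ τ : Fin n → BNode) : Prop := ∀ i, extends' (σ i) (τ i)

def tIncomp {n : ℕ} (σ τ : Fin n → BNode) : Prop := ¬ tExt σ τ ∧ ¬ tExt τ σ

def tdiff {n : ℕ} (σ τ : Fin n → BNode) : Set Ordinal :=
  {ξ | ∃ i, (σ i).1 ξ ≠ (τ i).1 ξ}

/-- `Δ(σ,τ)` for tuples: least level where some coordinate differs. -/
def tdelta {n : ℕ} (σ τ : Fin n → BNode) : Ordinal := sInf (tdiff σ τ)

def tmeet {n : ℕ} (σ τ : Fin n → BNode) : Fin n → BNode := tres σ (tdelta σ τ)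

def twedge {n : ℕ} (X : Set (Fin n → BNode)) : Set (Fin n → BNode) :=
  {w | ∃ σ ∈ X, ∃ τ ∈ X, tIncomp σ τ ∧ w = tmeet σ τ}

def tAntichain {n : ℕ} (X : Set (Fin n → BNode)) : Prop :=
  ∀ σ ∈ X, ∀ τ ∈ X, σ ≠ τ → tIncomp σ τ

/-- `σ ∈ K^{[n]} = K^n ∩ T^{[n]}`. -/
def KTup (T K : Set BNode) (n : ℕ) (σ : Fin n → BNode) : Prop :=
  IsTup T n σ ∧ ∀ i, σ i ∈ K

/-- The pair `{σ, τ}` (with `Ht σ ≤ Ht τ`) is regular: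
`D(τ(i), τ(0)) ∩ Ht(σ) = D(σ(i), σ(0))` for all `i < n`. -/
def RegPair (n : ℕ) (σ τ : Fin n → BNode) : Prop :=
  ∀ (h : 0 < n) (i : Fin n),
    diffSet (τ i) (τ ⟨0, h⟩) ∩ Set.Iio (ht (σ ⟨0, h⟩)) = diffSet (σ i) (σ ⟨0, h⟩)

/-- A set of tuples is regular if every pair of its elements is regular. -/
def RegSet {n : ℕ} (X : Set (Fin n → BNode)) : Prop :=
  ∀ σ ∈ X, ∀ τ ∈ X, (∀ i, ht (σ i) ≤ ht (τ i)) → RegPair n σ τ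

/-- A subtree of `T^{[n]}`: uncountable set of tuples closed under restriction. -/
def IsTupSubtree (T : Set BNode) (n : ℕ) (R : Set (Fin n → BNode)) : Prop :=
  (∀ σ ∈ R, IsTup T n σ) ∧ (∀ σ ∈ R, ∀ α, tres σ α ∈ R) ∧ ¬ R.Countable

/-- The family `F_n` of regular subtrees of `T^{[n]}` whose meets avoid `K^{[n]}`. -/
def Fn (T K : Set BNode) (n : ℕ) : Set (Set (Fin n → BNode)) :=
  {R | IsTupSubtree T n R ∧ RegSet R ∧ ∀ w ∈ twedge R, ¬ KTup T K n w}

/-- `F_n^⊥`: subtrees of `T^{[n]}` orthogonal to every member of `F_n`. -/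
def FnPerp (T K : Set BNode) (n : ℕ) : Set (Set (Fin n → BNode)) :=
  {B | IsTupSubtree T n B ∧ ∀ A ∈ Fn T K n, (A ∩ B).Countable}

/-- `⟨N_ξ : ξ ∈ C⟩` witnesses `φ₀(F_n)`. -/
def Phi0Witness (T K : Set BNode) (n : ℕ) (C : Set Ordinal)
    (N : Ordinal → Set (Set (Fin n → BNode))) : Prop :=
  IsClubBelow C ∧
  (∀ ξ ∈ C, (N ξ).Countable ∧ N ξ ⊆ Fn T K n ∪ FnPerp T K n) ∧
  (∀ ξ ∈ C, ∀ η ∈ C, ξ ≤ η → N ξ ⊆ N η) ∧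
  (∀ ν ∈ C, IsLimitOf C ν → N ν = ⋃ ξ ∈ C ∩ Set.Iio ν, N ξ) ∧
  (∀ ν ∈ C, ∀ σ : Fin n → BNode, IsTup T n σ → (∀ i, ht (σ i) = ν) →
    (∃ ν₀ < ν, ∀ ξ ∈ C, ν₀ < ξ → ξ < ν → ∃ A ∈ Fn T K n, A ∈ N ξ ∧ tres σ ξ ∈ A) ∨
    (∃ B ∈ FnPerp T K n, B ∈ N ν ∧ σ ∈ B))

/-- The coloring `K^{[n]}_φ`. -/
def KPhi (T K : Set BNode) (n : ℕ) (C : Set Ordinal)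
    (N : Ordinal → Set (Set (Fin n → BNode))) : Set (Fin n → BNode) :=
  {σ | IsTup T n σ ∧ ∃ ν ∈ C, (∀ i, ht (σ i) = ν) ∧
    ∃ B ∈ FnPerp T K n, B ∈ N ν ∧ σ ∈ B}

/-- The coloring `L^{[n]}_φ = (T^{[n]} ↾ C) \ K^{[n]}_φ`. -/
def LPhi (T K : Set BNode) (n : ℕ) (C : Set Ordinal)
    (N : Ordinal → Set (Set (Fin n → BNode))) : Set (Fin n → BNode) :=
  {σ | IsTup T n σ ∧ (∃ ν ∈ C, ∀ i, ht (σ i) = ν) ∧ σ ∉ KPhi T K n C N}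

/-- `ρ` is the `≤_lex`-sorted merge `σ ∪ τ` of the tuples `σ` and `τ`. -/
def IsMerge {n m : ℕ} (σ : Fin n → BNode) (τ : Fin m → BNode)
    (ρ : Fin (n + m) → BNode) : Prop :=
  (∀ i j : Fin (n + m), i ≤ j → lexLE (ρ i) (ρ j)) ∧
  (↑(List.ofFn ρ) : Multiset BNode) = ↑(List.ofFn σ) + ↑(List.ofFn τ)

/-- `σ` is a subsequence of `τ`. -/
def IsSubseq {m n : ℕ} (σ : Fin m → BNode) (τ : Fin n → BNode) : Prop :=
  ∃ ι : Fin m → Fin n, StrictMono ι ∧ σ = τ ∘ ι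

/-- A level sequence `{σ_α : α ∈ S}` in `T^{[n]}`. -/
def LevelSeq (T : Set BNode) (n : ℕ) (S : Set Ordinal)
    (σ : Ordinal → Fin n → BNode) : Prop :=
  ∀ α ∈ S, IsTup T n (σ α) ∧ ∀ i, ht (σ α i) = α

/-- The level sequence `{σ_α : α ∈ S}` is regular. -/
def RegSeq {n : ℕ} (S : Set Ordinal) (σ : Ordinal → Fin n → BNode) : Prop :=
  ∀ α ∈ S, ∀ β ∈ S, α ≤ β → RegPair n (σ α) (σ β)

/-- The tree `R_X` generated by `X` (downward closure). -/
def downClosure (X : Set BNode) : Set BNode :=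
  {r | ∃ t ∈ X, ∃ ξ ≤ ht t, r = restrict t ξ}

/-- The tree generated by a set of tuples. -/
def tDownClosure {n : ℕ} (X : Set (Fin n → BNode)) : Set (Fin n → BNode) :=
  {ρ | ∃ σ ∈ X, ∃ ξ, (∀ i, ξ ≤ ht (σ i)) ∧ ρ = tres σ ξ}

end Basis5
namespace Basis5

/-- Martin's Axiom `MA_{ℵ₁}`: every nonempty ccc partial preorder admits a filter
meeting any `ℵ₁`-many dense sets. -/
def CCCPre (P : Type 1) (le : P → P → Prop) : Prop :=
  ∀ A : Set P, (∀ p ∈ A, ∀ q ∈ A, p ≠ q → ¬ ∃ r, le r p ∧ le r q) → A.Countable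

def MAaleph1 : Prop :=
  ∀ (P : Type 1) (le : P → P → Prop), (∀ p, le p p) →
    (∀ p q r, le p q → le q r → le p r) → Nonempty P → CCCPre P le →
    ∀ (ι : Type 1) (D : ι → Set P), Cardinal.mk ι ≤ Cardinal.aleph 1 →
      (∀ i, ∀ p, ∃ q ∈ D i, le q p) →
      ∃ G : Set P, G.Nonempty ∧ (∀ p ∈ G, ∀ q, le p q → q ∈ G) ∧
        (∀ p ∈ G, ∀ q ∈ G, ∃ r ∈ G, le r p ∧ le r q) ∧ ∀ i, (G ∩ D i).Nonempty

/-- `π(X) = X`. -/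
def piClosed (X : Set BNode) : Prop :=
  ∀ s ∈ X, ∀ t ∈ X, ht s ≤ ht t → restrict t (ht s) ∈ X

/-- Every level-section of `X`, enumerated in `≤_lex`-increasing order, lies in `K_φ`. -/
def SectionsInKPhi (T K : Set BNode) (C : Set Ordinal)
    (N : (k : ℕ) → Ordinal → Set (Set (Fin k → BNode))) (X : Set BNode) : Prop :=
  ∀ α : Ordinal, {x ∈ X | ht x = α}.Nonempty →
    ∃ (k : ℕ) (ρ : Fin k → BNode), Function.Injective ρ ∧
      (∀ i j : Fin k, i ≤ j → lexLE (ρ i) (ρ j)) ∧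
      Set.range ρ = {x ∈ X | ht x = α} ∧ ρ ∈ KPhi T K k C (N k)

/-- All finite same-height `≤_lex`-sorted tuples from `X` lie in `K_φ`. -/
def FinLevelSubsetsInKPhi (T K : Set BNode) (C : Set Ordinal)
    (N : (k : ℕ) → Ordinal → Set (Set (Fin k → BNode))) (X : Set BNode) : Prop :=
  ∀ (k : ℕ) (ρ : Fin k → BNode), Function.Injective ρ → (∀ i, ρ i ∈ X) →
    (∀ i j, ht (ρ i) = ht (ρ j)) → (∀ i j : Fin k, i ≤ j → lexLE (ρ i) (ρ j)) →
    ρ ∈ KPhi T K k C (N k)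

section Forcing

variable {EM : Type 1}

/-- A condition of the forcing `∂*(K)`: a pair `(X_p, 𝓜_p)`.  Here `EM` is an abstract
type of (countable elementary submodels of `H(ω₂)`), `mem` its `∈`-relation,
`δe M = M ∩ ω₁`, and `E` the club `𝓔` of such models. -/
def IsCond (T K : Set BNode) (C : Set Ordinal)
    (N : (k : ℕ) → Ordinal → Set (Set (Fin k → BNode)))
    (mem : EM → EM → Prop) (δe : EM → Ordinal) (E : Set EM)
    (p : Set BNode × Set EM) : Prop :=
  p.1.Finite ∧ p.1 ⊆ T ∧ (∀ x ∈ p.1, ht x ∈ C) ∧ piClosed p.1 ∧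
  SectionsInKPhi T K C N p.1 ∧
  p.2.Finite ∧ p.2 ⊆ E ∧
  (∀ M ∈ p.2, ∀ M' ∈ p.2, M = M' ∨ mem M M' ∨ mem M' M) ∧
  (∀ x ∈ p.1, ∃ M ∈ p.2, ht x = δe M)

/-- The order of `∂*(K)`: coordinatewise reverse inclusion. -/
def condLE (p q : Set BNode × Set EM) : Prop := q.1 ⊆ p.1 ∧ q.2 ⊆ p.2

end Forcing

/-- Closure of `X` in the tree topology. -/
def clTree (X : Set BNode) : Set BNode :=
  X ∪ {t | (ht t ≠ 0 ∧ ∀ a < ht t, Order.succ a < ht t) ∧ ∀ β < ht t, ∃ s ∈ X, extends' s t ∧ β ≤ ht s}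

/-! ### Set-theoretic background: elementary submodels of `(V, ∈)`, properness, BPFA -/

/-- The language with a single binary relation (interpreted below as membership). -/
abbrev memLang : FirstOrder.Language := FirstOrder.Language.order

/-- `ZFSet.{0}` as a structure in the membership language: the unique binary relation
symbol is interpreted as `∈`. -/
instance : memLang.Structure ZFSet.{0} where
  RelMap | .le => fun x => x 0 ∈ x 1

/-- `R` is (codes) a partial order on the set `P`. -/
def ZIsPoset (P R : ZFSet.{0}) : Prop :=
  (∀ x y : ZFSet.{0}, ZFSet.pair x y ∈ R → x ∈ P ∧ y ∈ P) ∧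
  (∀ x ∈ P, ZFSet.pair x x ∈ R) ∧
  (∀ x y z : ZFSet.{0}, ZFSet.pair x y ∈ R → ZFSet.pair y z ∈ R → ZFSet.pair x z ∈ R) ∧
  (∀ x y : ZFSet.{0}, ZFSet.pair x y ∈ R → ZFSet.pair y x ∈ R → x = y)

def ZCompat (P R p q : ZFSet.{0}) : Prop :=
  ∃ r ∈ P, ZFSet.pair r p ∈ R ∧ ZFSet.pair r q ∈ R

def ZDense (P R D : ZFSet.{0}) : Prop :=
  (∀ x ∈ D, x ∈ P) ∧ ∀ p ∈ P, ∃ q ∈ D, ZFSet.pair q p ∈ R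

/-- Properness of the poset `(P, R)`, via countable elementary submodels of the
universe of sets: every condition in such a model has a generic extension. -/
def ZIsProper (P R : ZFSet.{0}) : Prop :=
  ∀ M : memLang.ElementarySubstructure ZFSet.{0}, (M : Set ZFSet.{0}).Countable →
    P ∈ (M : Set ZFSet.{0}) → R ∈ (M : Set ZFSet.{0}) →
    ∀ p ∈ (M : Set ZFSet.{0}), p ∈ P →
      ∃ q ∈ P, ZFSet.pair q p ∈ R ∧
        ∀ D ∈ (M : Set ZFSet.{0}), ZDense P R D →
          ∀ r ∈ P, ZFSet.pair r q ∈ R → ∃ s ∈ (M : Set ZFSet.{0}), s ∈ D ∧ ZCompat P R s r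

/-- The Bounded Proper Forcing Axiom: for every proper poset and `ℵ₁`-many maximal
antichains of size `≤ ℵ₁`, there is a filter meeting them all. -/
def BPFA : Prop :=
  ∀ P R : ZFSet.{0}, ZIsPoset P R → ZIsProper P R →
    ∀ (ι : Type 1) (A : ι → ZFSet.{0}), Cardinal.mk ι ≤ Cardinal.aleph 1 →
      (∀ i, (A i).toSet ⊆ P.toSet ∧ Cardinal.mk (A i).toSet ≤ Cardinal.aleph 1 ∧
        (∀ a ∈ A i, ∀ b ∈ A i, a ≠ b → ¬ ZCompat P R a b) ∧
        (∀ p ∈ P, ∃ a ∈ A i, ZCompat P R a p)) →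
      ∃ G : Set ZFSet.{0}, G ⊆ P.toSet ∧
        (∀ p ∈ G, ∀ q ∈ P.toSet, ZFSet.pair p q ∈ R → q ∈ G) ∧
        (∀ p ∈ G, ∀ q ∈ G, ∃ r ∈ G, ZFSet.pair r p ∈ R ∧ ZFSet.pair r q ∈ R) ∧
        ∀ i, ∃ a, a ∈ A i ∧ a ∈ G

/-! ### The axiom φ, stated for Aronszajn trees of `n`-tuples (the trees used in the paper) -/

/-- An Aronszajn tree of `n`-tuples (a subtree of the `n`-th power of `2^{<ω₁}`). -/
def TupAronszajn (n : ℕ) (𝒯 : Set (Fin n → BNode)) : Prop :=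
  (∀ σ ∈ 𝒯, (∀ i j, ht (σ i) = ht (σ j))) ∧
  (∀ σ ∈ 𝒯, ∀ α, tres σ α ∈ 𝒯) ∧ ¬ 𝒯.Countable ∧
  (∀ α, {σ ∈ 𝒯 | ∀ i, ht (σ i) = α}.Countable) ∧
  (∀ c ⊆ 𝒯, (∀ σ ∈ c, ∀ τ ∈ c, tExt σ τ ∨ tExt τ σ) → c.Countable)

/-- A subtree of a tuple-tree. -/
def TupSubtree {n : ℕ} (𝒯 A : Set (Fin n → BNode)) : Prop :=
  A ⊆ 𝒯 ∧ (∀ σ ∈ A, ∀ α, tres σ α ∈ A) ∧ ¬ A.Countable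

/-- `F^⊥` for a family `F` of subtrees of `𝒯`. -/
def GPerp {n : ℕ} (𝒯 : Set (Fin n → BNode)) (F : Set (Set (Fin n → BNode))) :
    Set (Set (Fin n → BNode)) :=
  {B | TupSubtree 𝒯 B ∧ ∀ A ∈ F, (A ∩ B).Countable}

/-- `φ₀(F)` for a family `F` of subtrees of the tree `𝒯`. -/
def GPhi0 {n : ℕ} (𝒯 : Set (Fin n → BNode)) (F : Set (Set (Fin n → BNode))) : Prop :=
  ∃ (C : Set Ordinal) (N : Ordinal → Set (Set (Fin n → BNode))),
    IsClubBelow C ∧ (∀ ξ ∈ C, (N ξ).Countable ∧ N ξ ⊆ F ∪ GPerp 𝒯 F) ∧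
    (∀ ξ ∈ C, ∀ η ∈ C, ξ ≤ η → N ξ ⊆ N η) ∧
    (∀ ν ∈ C, IsLimitOf C ν → N ν = ⋃ ξ ∈ C ∩ Set.Iio ν, N ξ) ∧
    ∀ ν ∈ C, ∀ σ ∈ 𝒯, (∀ i, ht (σ i) = ν) →
      (∃ ν₀ < ν, ∀ ξ ∈ C, ν₀ < ξ → ξ < ν → ∃ A ∈ F, A ∈ N ξ ∧ tres σ ξ ∈ A) ∨
      (∃ B ∈ GPerp 𝒯 F, B ∈ N ν ∧ σ ∈ B)

/-- The axiom `φ`: for every Aronszajn (tuple-)tree `𝒯` and every family `F`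
of subtrees of `𝒯`, `φ₀(F)` holds. -/
def phiAxiom : Prop :=
  ∀ (n : ℕ) (𝒯 : Set (Fin n → BNode)), TupAronszajn n 𝒯 →
    ∀ F : Set (Set (Fin n → BNode)), (∀ A ∈ F, TupSubtree 𝒯 A) → GPhi0 𝒯 F

end Basis5
namespace Basis5

/-! A node of `L^{[1]}_φ` at a limit of `C` cannot satisfy clause (2) of `φ₀(F₁)`, so it
satisfies clause (1), and the limit provides some `ξ ∈ C` above `ν_t`: hence `F₁` has a member
`A`. Its projection `R` to `T` is a subtree of `T` all of whose meets lie in `R`, hence outside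
`K`. Since `T` is special, some fibre of the specializing map on `R` is uncountable, and such a
fibre is an antichain `X`; as `∧(X) ⊆ ∧(R)`, the meets of `X` avoid `K`. -/

theorem IsLimitOf.exists_mem_between {C : Set Ordinal} {ν ν₀ : Ordinal} (hlim : IsLimitOf C ν)
    (hν₀ : ν₀ < ν) : ∃ ξ ∈ C, ν₀ < ξ ∧ ξ < ν := by
  obtain ⟨ξ, ⟨hξC, hξν⟩, hν₀ξ⟩ := exists_lt_of_lt_csSup hlim.1 (hlim.2.symm ▸ hν₀)
  exact ⟨ξ, hξC, hν₀ξ, hξν⟩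

theorem exists_mem_Fn_of_mem_LPhi {T K : Set BNode} {n : ℕ} {C : Set Ordinal}
    {N : Ordinal → Set (Set (Fin n → BNode))} (hW : Phi0Witness T K n C N)
    {σ : Fin n → BNode} (hσ : σ ∈ LPhi T K n C N) {ν : Ordinal} (hνC : ν ∈ C)
    (hσν : ∀ i, ht (σ i) = ν) (hlim : IsLimitOf C ν) :
    ∃ ξ ∈ C, ξ < ν ∧ ∃ A ∈ Fn T K n, A ∈ N ξ ∧ tres σ ξ ∈ A := by
  obtain ⟨hσT, -, hσK⟩ := hσ
  rcases hW.2.2.2.2 ν hνC σ hσT hσν with ⟨ν₀, hν₀, hclause⟩ | ⟨B, hB, hBN, hσB⟩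
  · obtain ⟨ξ, hξC, hν₀ξ, hξν⟩ := hlim.exists_mem_between hν₀
    exact ⟨ξ, hξC, hξν, hclause ξ hξC hν₀ξ hξν⟩
  · exact absurd ⟨hσT, ν, hνC, hσν, B, hB, hBN, hσB⟩ hσK

theorem IsSpecial.exists_antichain_subset {T R : Set BNode} (hT : IsSpecial T) (hRT : R ⊆ T)
    (hR : ¬ R.Countable) : ∃ X ⊆ R, IsAntichainN X ∧ ¬ X.Countable := by
  obtain ⟨f, hf⟩ := hT
  obtain ⟨k, hk⟩ : ∃ k : ℕ, ¬ {s ∈ R | f s = k}.Countable := by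
    by_contra! h
    refine hR ((Set.countable_iUnion h).mono fun s hs => ?_)
    exact Set.mem_iUnion.2 ⟨f s, hs, rfl⟩
  refine ⟨{s ∈ R | f s = k}, fun s hs => hs.1, ?_, hk⟩
  rintro s ⟨hsR, hsk⟩ u ⟨huR, huk⟩ hsu
  exact ⟨fun h => hf s (hRT hsR) u (hRT huR) h hsu (hsk.trans huk.symm),
    fun h => hf u (hRT huR) s (hRT hsR) h hsu.symm (huk.trans hsk.symm)⟩

theorem wedgeSet_mono {X Y : Set BNode} (h : X ⊆ Y) : wedgeSet X ⊆ wedgeSet Y := by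
  rintro w ⟨s, hs, u, hu, hsu, rfl⟩
  exact ⟨s, h hs, u, h hu, hsu, rfl⟩

section ConstTuple

variable {n : ℕ} [NeZero n] {s u : BNode}

theorem tIncomp_const_iff : tIncomp (fun _ : Fin n => s) (fun _ => u) ↔ Incomp s u := by
  simp only [tIncomp, tExt, Incomp, forall_const]

theorem tmeet_const : tmeet (fun _ : Fin n => s) (fun _ => u) = fun _ => meet s u := by
  have hdiff : tdiff (fun _ : Fin n => s) (fun _ => u) = diffSet s u := by
    ext ξ
    simp only [tdiff, diffSet, Set.mem_ofPred_eq, exists_const]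
  funext i
  rw [tmeet, tdelta, hdiff]
  rfl

end ConstTuple

theorem exists_subtree_of_mem_Fn_one {T K : Set BNode} {A : Set (Fin 1 → BNode)}
    (hA : A ∈ Fn T K 1) : ∃ R ⊆ T, ¬ R.Countable ∧ wedgeSet R ∩ K = ∅ := by
  obtain ⟨⟨hAT, hAres, hAunc⟩, -, hAwedge⟩ := hA
  have hconst : ∀ σ : Fin 1 → BNode, (fun _ => σ 0) = σ := fun σ => funext fun i => by
    rw [Fin.fin_one_eq_zero i]
  refine ⟨(fun s _ => s) ⁻¹' A, fun s hs => (hAT _ hs).1 0, fun hR => hAunc ?_, ?_⟩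
  · refine (hR.image fun s (_ : Fin 1) => s).mono fun σ hσ => ?_
    exact ⟨σ 0, by simpa only [Set.mem_preimage, hconst], hconst σ⟩
  · refine Set.eq_empty_of_forall_notMem ?_
    rintro _ ⟨⟨s, hs, u, hu, hsu, rfl⟩, hK⟩
    have hmeetA : (fun _ => meet s u) ∈ A := tmeet_const (n := 1) ▸ hAres _ hs _
    exact hAwedge _ ⟨_, hs, _, hu, tIncomp_const_iff.2 hsu, tmeet_const.symm⟩
      ⟨hAT _ hmeetA, fun _ => hK⟩

theorem stmt9_general (T K : Set BNode) (hsp : IsSpecial T)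
    (C : Set Ordinal) (N : Ordinal → Set (Set (Fin 1 → BNode)))
    (hW : Phi0Witness T K 1 C N) (t : BNode)
    (hmem : (fun _ : Fin 1 => t) ∈ LPhi T K 1 C N)
    (hlim : IsLimitOf C (ht t)) :
    ∃ X ⊆ T, IsAntichainN X ∧ ¬ X.Countable ∧ wedgeSet X ∩ K = ∅ := by
  obtain ⟨ν, hνC, hν⟩ := hmem.2.1
  obtain ⟨-, -, -, A, hA, -, -⟩ :=
    exists_mem_Fn_of_mem_LPhi hW hmem hνC hν (hν 0 ▸ hlim)
  obtain ⟨R, hRT, hRunc, hRK⟩ := exists_subtree_of_mem_Fn_one hA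
  obtain ⟨X, hXR, hXanti, hXunc⟩ := hsp.exists_antichain_subset hRT hRunc
  refine ⟨X, hXR.trans hRT, hXanti, hXunc, Set.eq_empty_of_subset_empty ?_⟩
  exact hRK ▸ Set.inter_subset_inter_left K (wedgeSet_mono hXR)

/-- if some node of `L^{[1]}_φ` has height a limit point of `C`, then
there is an uncountable antichain `X ⊆ T` with `∧(X) ∩ K = ∅`. -/
theorem stmt9 (T K : Set BNode) (hcoh : Coherent T) (hsp : IsSpecial T)
    (hAr : IsAronszajn T) (hfm : FinModClosed T) (hKT : K ⊆ T)
    (C : Set Ordinal) (N : Ordinal → Set (Set (Fin 1 → BNode)))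
    (hW : Phi0Witness T K 1 C N) (t : BNode)
    (hmem : (fun _ : Fin 1 => t) ∈ LPhi T K 1 C N)
    (hlim : IsLimitOf C (ht t)) :
    ∃ X ⊆ T, IsAntichainN X ∧ ¬ X.Countable ∧ wedgeSet X ∩ K = ∅ :=
  stmt9_general T K hsp C N hW t hmem hlim
end Basis5
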